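/- With Q_{t,s} as above, for every T>0 there exists a constant C=C(T)>0 such that (det Q_{t,s})^{1/2} ≥ C (t−s)^{d/2} for all 0<s<t<T. -/

import Mathlib

/-!
On `[-t, -s]` the integrand of `Q_{t,s}` is the Gram matrix `A Aᵀ` of `A = Ũ(-s, r)`, whose
inverse is the backward propagator `Ũ(r, -s)` (uniqueness for the linear ODE). If `‖M‖ ≤ K` on
`[-T, T]`, Grönwall bounds `Ũ(r, -s)` by `e^{KT}` for `-T ≤ r ≤ -s ≤ 0`, so `A Aᵀ ≥ c I` with
`c = (d e^{2KT})⁻¹`. Integrating gives `Q_{t,s} ≥ c (t - s) I`, hence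
`det Q_{t,s} ≥ (c (t - s))^d`.
-/

open MeasureTheory Matrix Set

attribute [local instance] Matrix.linftyOpNormedAddCommGroup

variable {n : Type*} [Fintype n]

theorem norm_le_mul_exp_of_hasDerivAt_mulVec {A : ℝ → Matrix n n ℝ} {y : ℝ → n → ℝ}
    {a b K : ℝ} (hab : a ≤ b) (hy : ∀ τ ∈ Icc a b, HasDerivAt y (A τ *ᵥ y τ) τ)
    (hA : ∀ τ ∈ Icc a b, ‖A τ‖ ≤ K) :
    ‖y b‖ ≤ ‖y a‖ * Real.exp (K * (b - a)) := by
  have h := norm_le_gronwallBound_of_norm_deriv_right_le (ε := 0)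
    (HasDerivAt.continuousOn hy)
    (fun τ hτ => (hy τ (Ico_subset_Icc_self hτ)).hasDerivWithinAt) le_rfl
    (fun τ hτ => by
      rw [add_zero]
      exact (linfty_opNorm_mulVec _ _).trans (by gcongr; exact hA τ (Ico_subset_Icc_self hτ)))
    b (right_mem_Icc.2 hab)
  rwa [gronwallBound_ε0] at h

theorem sq_norm_le_dotProduct_self (v : n → ℝ) : ‖v‖ ^ 2 ≤ v ⬝ᵥ v := by
  have hv : 0 ≤ v ⬝ᵥ v := Finset.sum_nonneg fun i _ => mul_self_nonneg (v i)
  refine (Real.le_sqrt (norm_nonneg v) hv).1 ((pi_norm_le_iff_of_nonneg (Real.sqrt_nonneg _)).2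
    fun i => Real.abs_le_sqrt ?_)
  simpa [dotProduct, sq] using
    Finset.single_le_sum (fun j _ => mul_self_nonneg (v j)) (Finset.mem_univ i)

theorem dotProduct_self_le_card_mul_sq_norm (v : n → ℝ) :
    v ⬝ᵥ v ≤ Fintype.card n * ‖v‖ ^ 2 := by
  calc v ⬝ᵥ v = ∑ i, |v i| ^ 2 := by simp [dotProduct, sq]
    _ ≤ ∑ _i : n, ‖v‖ ^ 2 := Finset.sum_le_sum fun i _ => by
        gcongr
        exact norm_le_pi_norm v i
    _ = Fintype.card n * ‖v‖ ^ 2 := by simp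

theorem sq_dotProduct_le (v w : n → ℝ) : (v ⬝ᵥ w) ^ 2 ≤ (v ⬝ᵥ v) * (w ⬝ᵥ w) := by
  simpa [dotProduct, sq] using Finset.sum_mul_sq_le_sq_mul_sq Finset.univ v w

theorem dotProduct_self_le_of_mul_eq_one [DecidableEq n] {A V : Matrix n n ℝ} {E : ℝ}
    (hAV : A * V = 1) (hV : ∀ w, ‖V *ᵥ w‖ ≤ E * ‖w‖) (x : n → ℝ) :
    x ⬝ᵥ x ≤ Fintype.card n * E ^ 2 * (x ⬝ᵥ ((A * Aᵀ) *ᵥ x)) := by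
  set z := Aᵀ *ᵥ x
  have hquad : x ⬝ᵥ ((A * Aᵀ) *ᵥ x) = z ⬝ᵥ z := by
    rw [← mulVec_mulVec, dotProduct_mulVec, ← mulVec_transpose]
  have hx : x ⬝ᵥ x = (V *ᵥ x) ⬝ᵥ z := by
    have : x = Vᵀ *ᵥ z := by
      rw [mulVec_mulVec, ← transpose_mul, hAV, transpose_one, one_mulVec]
    nth_rw 2 [this]
    rw [dotProduct_mulVec, vecMul_transpose]
  have hVx : (V *ᵥ x) ⬝ᵥ (V *ᵥ x) ≤ Fintype.card n * E ^ 2 * (x ⬝ᵥ x) :=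
    calc (V *ᵥ x) ⬝ᵥ (V *ᵥ x) ≤ Fintype.card n * ‖V *ᵥ x‖ ^ 2 :=
          dotProduct_self_le_card_mul_sq_norm _
      _ ≤ Fintype.card n * (E * ‖x‖) ^ 2 := by
          gcongr
          exact hV x
      _ ≤ Fintype.card n * E ^ 2 * (x ⬝ᵥ x) := by
          rw [mul_pow, ← mul_assoc]
          gcongr
          exact sq_norm_le_dotProduct_self x
  have hxx : 0 ≤ x ⬝ᵥ x := Finset.sum_nonneg fun i _ => mul_self_nonneg (x i)
  have hzz : 0 ≤ z ⬝ᵥ z := Finset.sum_nonneg fun i _ => mul_self_nonneg (z i)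
  have hCS :
      (x ⬝ᵥ x) * (x ⬝ᵥ x) ≤ (x ⬝ᵥ x) * (Fintype.card n * E ^ 2 * (z ⬝ᵥ z)) :=
    calc (x ⬝ᵥ x) * (x ⬝ᵥ x) = ((V *ᵥ x) ⬝ᵥ z) ^ 2 := by rw [← hx, sq]
      _ ≤ ((V *ᵥ x) ⬝ᵥ (V *ᵥ x)) * (z ⬝ᵥ z) := sq_dotProduct_le _ _
      _ ≤ Fintype.card n * E ^ 2 * (x ⬝ᵥ x) * (z ⬝ᵥ z) := by gcongr
      _ = (x ⬝ᵥ x) * (Fintype.card n * E ^ 2 * (z ⬝ᵥ z)) := by ring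
  rw [hquad]
  rcases hxx.eq_or_lt with h0 | hpos
  · rw [← h0]; positivity
  · exact le_of_mul_le_mul_left hCS hpos

theorem Matrix.IsHermitian.pow_card_le_det [DecidableEq n] {A : Matrix n n ℝ}
    (hA : A.IsHermitian) {c : ℝ} (hc : 0 ≤ c)
    (h : ∀ x, c * (x ⬝ᵥ x) ≤ x ⬝ᵥ (A *ᵥ x)) :
    c ^ Fintype.card n ≤ A.det := by
  have heig : ∀ i, c ≤ hA.eigenvalues i := fun i => by
    set v : n → ℝ := ⇑(hA.eigenvectorBasis i)
    have hv : v ⬝ᵥ v = 1 := by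
      have := hA.eigenvectorBasis.orthonormal.1 i
      rw [EuclideanSpace.norm_eq, Real.sqrt_eq_one] at this
      simpa [dotProduct, sq] using this
    simpa [hA.eigenvalues_eq i, hv] using h v
  rw [hA.det_eq_prod_eigenvalues, ← Finset.card_univ, ← Finset.prod_const]
  exact Finset.prod_le_prod (fun _ _ => hc) fun i _ => by simpa using heig i

theorem dotProduct_mulVec_eq_integral {F : ℝ → Matrix n n ℝ} {A : Matrix n n ℝ} {a b : ℝ}
    (hA : ∀ i j, A i j = ∫ r in a..b, F r i j)
    (hF : ∀ i j, IntervalIntegrable (fun r => F r i j) volume a b) (x : n → ℝ) :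
    x ⬝ᵥ (A *ᵥ x) = ∫ r in a..b, x ⬝ᵥ (F r *ᵥ x) := by
  have hij : ∀ i j, IntervalIntegrable (fun r => x i * (F r i j * x j)) volume a b :=
    fun i j => ((hF i j).mul_const (x j)).const_mul (x i)
  have hi : ∀ i, IntervalIntegrable (fun r => ∑ j, x i * (F r i j * x j)) volume a b :=
    fun i => by simpa only [Finset.sum_fn] using IntervalIntegrable.sum _ fun j _ => hij i j
  simp only [dotProduct, mulVec, Finset.mul_sum, hA]
  rw [intervalIntegral.integral_finsetSum fun i _ => hi i]
  refine Finset.sum_congr rfl fun i _ => ?_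
  rw [intervalIntegral.integral_finsetSum fun j _ => hij i j]
  refine Finset.sum_congr rfl fun j _ => ?_
  rw [intervalIntegral.integral_const_mul, intervalIntegral.integral_mul_const]

theorem mul_dotProduct_self_le_of_integral {F : ℝ → Matrix n n ℝ} {A : Matrix n n ℝ}
    {a b c : ℝ} (hab : a ≤ b) (hF : ContinuousOn F (Icc a b))
    (hA : ∀ i j, A i j = ∫ r in a..b, F r i j)
    (hc : ∀ r ∈ Icc a b, ∀ x, c * (x ⬝ᵥ x) ≤ x ⬝ᵥ (F r *ᵥ x)) (x : n → ℝ) :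
    c * (b - a) * (x ⬝ᵥ x) ≤ x ⬝ᵥ (A *ᵥ x) := by
  have hquad : ContinuousOn (fun r => x ⬝ᵥ (F r *ᵥ x)) (Icc a b) :=
    (continuous_const.dotProduct (continuous_id.matrix_mulVec continuous_const)).comp_continuousOn
      hF
  rw [← uIcc_of_le hab] at hF hquad
  have hint := intervalIntegral.integral_mono_on hab intervalIntegrable_const
    (hquad.intervalIntegrable (μ := volume)) fun r hr => hc r hr x
  have hentry : ∀ i j, IntervalIntegrable (fun r => F r i j) volume a b := fun i j =>
    ((continuous_id.matrix_elem i j).comp_continuousOn hF).intervalIntegrable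
  rw [dotProduct_mulVec_eq_integral hA hentry x]
  simpa [mul_comm, mul_left_comm, mul_assoc] using hint

section Propagator

variable {M : ℝ → Matrix n n ℝ} {U : ℝ → ℝ → Matrix n n ℝ}

theorem hasDerivAt_propagator_mulVec
    (hU : ∀ s t : ℝ, ∀ i j : n, HasDerivAt (fun τ => U τ s i j) ((M (-t) * U t s) i j) t)
    (σ τ : ℝ) (w : n → ℝ) :
    HasDerivAt (fun τ => U τ σ *ᵥ w) (M (-τ) *ᵥ (U τ σ *ᵥ w)) τ := by
  rw [mulVec_mulVec]
  refine hasDerivAt_pi.2 fun i => ?_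
  simpa [mulVec, dotProduct] using
    HasDerivAt.fun_sum (u := Finset.univ) fun k _ => (hU σ τ i k).mul_const (w k)

theorem norm_propagator_mulVec_le [DecidableEq n] (hU1 : ∀ s, U s s = 1)
    (hU : ∀ s t : ℝ, ∀ i j : n, HasDerivAt (fun τ => U τ s i j) ((M (-t) * U t s) i j) t)
    {r σ K : ℝ} (hrσ : r ≤ σ) (hK : ∀ u ∈ Icc (-σ) (-r), ‖M u‖ ≤ K)
    (w : n → ℝ) :
    ‖U r σ *ᵥ w‖ ≤ ‖w‖ * Real.exp (K * (σ - r)) := by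
  -- Reversing time, `u ↦ U (-u) σ *ᵥ w` solves `y' = -M u *ᵥ y` forwards from `u = -σ`.
  have hy : ∀ u ∈ Icc (-σ) (-r),
      HasDerivAt (fun u => U (-u) σ *ᵥ w) ((-M u) *ᵥ (U (-u) σ *ᵥ w)) u := fun u _ => by
    simpa [Function.comp_def, neg_mulVec] using
      (hasDerivAt_propagator_mulVec hU σ (-u) w).scomp u (hasDerivAt_neg u)
  have h := norm_le_mul_exp_of_hasDerivAt_mulVec (neg_le_neg hrσ) hy
    (fun u hu => (norm_neg (M u)).le.trans (hK u hu))
  simpa [hU1, sub_eq_add_neg, add_comm] using h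

theorem propagator_mul_propagator_eq_one [DecidableEq n] (hU1 : ∀ s, U s s = 1)
    (hU : ∀ s t : ℝ, ∀ i j : n, HasDerivAt (fun τ => U τ s i j) ((M (-t) * U t s) i j) t)
    {r σ K : ℝ} (hrσ : r ≤ σ) (hK : ∀ u ∈ Icc (-σ) (-r), ‖M u‖ ≤ K) :
    U σ r * U r σ = 1 := by
  refine ext_of_mulVec_single fun j => ?_
  set w : n → ℝ := Pi.single j 1
  -- The difference of two solutions that agree at time `r`; Grönwall keeps it at zero.
  have hy : ∀ τ ∈ Icc r σ, HasDerivAt (fun τ => U τ r *ᵥ (U r σ *ᵥ w) - U τ σ *ᵥ w)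
      (M (-τ) *ᵥ (U τ r *ᵥ (U r σ *ᵥ w) - U τ σ *ᵥ w)) τ := fun τ _ => by
    rw [mulVec_sub]
    exact (hasDerivAt_propagator_mulVec hU r τ _).sub (hasDerivAt_propagator_mulVec hU σ τ w)
  have h := norm_le_mul_exp_of_hasDerivAt_mulVec hrσ hy
    (fun τ hτ => hK (-τ) ⟨neg_le_neg hτ.2, neg_le_neg hτ.1⟩)
  simp only [hU1, one_mulVec, sub_self, norm_zero, zero_mul, norm_le_zero_iff, sub_eq_zero] at h
  rw [← mulVec_mulVec, h, one_mulVec]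

theorem continuousOn_propagator_right [DecidableEq n] (hM : Continuous M)
    (hU1 : ∀ s, U s s = 1)
    (hU : ∀ s t : ℝ, ∀ i j : n, HasDerivAt (fun τ => U τ s i j) ((M (-t) * U t s) i j) t)
    (σ : ℝ) : ContinuousOn (fun r => U σ r) (Iic σ) := by
  have hcont : Continuous fun r => U r σ :=
    continuous_matrix fun i j => continuous_iff_continuousAt.2 fun r => (hU σ r i j).continuousAt
  have hinv : ∀ r ∈ Iic σ, U σ r * U r σ = 1 := fun r hr => by
    obtain ⟨K, hK⟩ :=
      isCompact_Icc.exists_bound_of_continuousOn (hM.continuousOn (s := Icc (-σ) (-r)))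
    exact propagator_mul_propagator_eq_one hU1 hU hr hK
  refine ContinuousOn.congr (f := fun r => (U r σ)⁻¹) (fun r hr => ?_)
    (fun r hr => (inv_eq_left_inv (hinv r hr)).symm)
  refine ((continuousAt_matrix_inv _ ?_).comp hcont.continuousAt).continuousWithinAt
  rw [Ring.inverse_eq_inv']
  exact continuousAt_inv₀ (det_ne_zero_of_left_inverse (hinv r hr))

theorem continuousOn_propagator_gram [DecidableEq n] (hM : Continuous M)
    (hU1 : ∀ s, U s s = 1)
    (hU : ∀ s t : ℝ, ∀ i j : n, HasDerivAt (fun τ => U τ s i j) ((M (-t) * U t s) i j) t)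
    (σ : ℝ) : ContinuousOn (fun r => U σ r * (U σ r)ᵀ) (Iic σ) :=
  (continuousOn_propagator_right hM hU1 hU σ).mul
    (continuous_id.matrix_transpose.comp_continuousOn
      (continuousOn_propagator_right hM hU1 hU σ))

theorem inv_card_mul_sq_mul_dotProduct_self_le_propagator_gram [DecidableEq n] [Nonempty n]
    (hU1 : ∀ s, U s s = 1)
    (hU : ∀ s t : ℝ, ∀ i j : n, HasDerivAt (fun τ => U τ s i j) ((M (-t) * U t s) i j) t)
    {r σ K E : ℝ} (hrσ : r ≤ σ) (hK : ∀ u ∈ Icc (-σ) (-r), ‖M u‖ ≤ K)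
    (hE : Real.exp (K * (σ - r)) ≤ E) (x : n → ℝ) :
    (Fintype.card n * E ^ 2)⁻¹ * (x ⬝ᵥ x) ≤ x ⬝ᵥ ((U σ r * (U σ r)ᵀ) *ᵥ x) := by
  have hE0 : 0 < E := (Real.exp_pos _).trans_le hE
  refine (inv_mul_le_iff₀ (by positivity)).2 (dotProduct_self_le_of_mul_eq_one
    (propagator_mul_propagator_eq_one hU1 hU hrσ hK) (fun w => ?_) x)
  rw [mul_comm E]
  exact (norm_propagator_mulVec_le hU1 hU hrσ hK w).trans (by gcongr)

end Propagator

/-- With `Q_{t,s}` as above, for every `T > 0` there exists a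
constant `C = C(T) > 0` such that `(det Q_{t,s})^{1/2} ≥ C (t−s)^{d/2}` for all
`0 < s < t < T`. -/
theorem stmt2 (d : ℕ) (M : ℝ → Matrix (Fin d) (Fin d) ℝ)
    (hM : Continuous M)
    (Ut : ℝ → ℝ → Matrix (Fin d) (Fin d) ℝ)
    (hUinit : ∀ s : ℝ, Ut s s = 1)
    (hUderiv : ∀ s t : ℝ, ∀ i j : Fin d,
      HasDerivAt (fun τ : ℝ => Ut τ s i j) ((M (-t) * Ut t s) i j) t)
    (Q : ℝ → ℝ → Matrix (Fin d) (Fin d) ℝ)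
    (hQ : ∀ s t : ℝ, ∀ i j : Fin d,
      Q s t i j = ∫ r in (-t)..(-s), (Ut (-s) r * (Ut (-s) r)ᵀ) i j)
    (T : ℝ) (hT : 0 < T) :
    ∃ C > 0, ∀ s t : ℝ, 0 < s → s < t → t < T →
      C * (t - s) ^ ((d : ℝ) / 2) ≤ Real.sqrt ((Q s t).det) := by
  obtain rfl | hd := Nat.eq_zero_or_pos d
  · exact ⟨1, one_pos, fun s t _ _ _ => by simp⟩
  have : Nonempty (Fin d) := ⟨⟨0, hd⟩⟩
  obtain ⟨K, hK⟩ :=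
    isCompact_Icc.exists_bound_of_continuousOn (hM.continuousOn (s := Icc (-T) T))
  have hK0 : 0 ≤ K := (norm_nonneg _).trans (hK 0 ⟨by linarith, by linarith⟩)
  set c := ((d : ℝ) * Real.exp (K * T) ^ 2)⁻¹
  have hc : 0 < c := by positivity
  refine ⟨c ^ ((d : ℝ) / 2), by positivity, fun s t hs hst htT => ?_⟩
  have hgram : ∀ r ∈ Icc (-t) (-s), ∀ x,
      c * (x ⬝ᵥ x) ≤ x ⬝ᵥ ((Ut (-s) r * (Ut (-s) r)ᵀ) *ᵥ x) := fun r hr x => by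
    simpa only [Fintype.card_fin] using
      inv_card_mul_sq_mul_dotProduct_self_le_propagator_gram (E := Real.exp (K * T))
        hUinit hUderiv hr.2 (fun u hu => hK u ⟨by linarith [hu.1], by linarith [hu.2, hr.1]⟩)
        (Real.exp_le_exp.2 (mul_le_mul_of_nonneg_left (by linarith [hr.1]) hK0)) x
  have hQx : ∀ x, c * (t - s) * (x ⬝ᵥ x) ≤ x ⬝ᵥ (Q s t *ᵥ x) := fun x => by
    simpa [sub_eq_add_neg, add_comm] using mul_dotProduct_self_le_of_integral (by linarith)
      ((continuousOn_propagator_gram hM hUinit hUderiv (-s)).mono Icc_subset_Iic_self)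
      (hQ s t) hgram x
  have hQsymm : (Q s t).IsHermitian := isHermitian_iff_isSymm.2 <| IsSymm.ext fun i j => by
    simp only [hQ, mul_apply, transpose_apply, mul_comm]
  calc c ^ ((d : ℝ) / 2) * (t - s) ^ ((d : ℝ) / 2) = √((c * (t - s)) ^ d) := by
        rw [← Real.mul_rpow hc.le (by linarith), Real.sqrt_eq_rpow, ← Real.rpow_natCast,
          ← Real.rpow_mul (by nlinarith)]
        ring_nf
    _ ≤ √((Q s t).det) := Real.sqrt_le_sqrt (by
        simpa using hQsymm.pow_card_le_det (by nlinarith) hQx)
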